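/- Let (f, g, h) be a Darboux triple on a connected surface S with f an immersion. Then the image of dh(p) is contained in the image of df(p) for all p ∈ S. -/

import Mathlib

open Matrix

open ContinuousLinearMap

/-- The cross product as a continuous bilinear map. -/
noncomputable def clmCross : (Fin 3 → ℝ) →L[ℝ] (Fin 3 → ℝ) →L[ℝ] (Fin 3 → ℝ) :=
  LinearMap.toContinuousLinearMap
    { toFun := fun v => LinearMap.toContinuousLinearMap (crossProduct v)
      map_add' := by
        intro u v; ext w j
        simp [map_add, LinearMap.add_apply]
      map_smul' := by
        intro c v; ext w j
        simp [LinearMap.map_smul, LinearMap.smul_apply] }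

@[simp] lemma clmCross_apply (v w : Fin 3 → ℝ) : clmCross v w = v ⨯₃ w := rfl

lemma dot_cross_zero_of_cross_eq (x y a b : Fin 3 → ℝ) (hxy : x ⨯₃ b = y ⨯₃ a) :
    x ⬝ᵥ (a ⨯₃ b) = 0 ∧ y ⬝ᵥ (a ⨯₃ b) = 0 := by
  have h1 := congrArg (fun z => a ⬝ᵥ z) hxy
  have h2 := congrArg (fun z => b ⬝ᵥ z) hxy
  simp only [cross_apply, dotProduct, Fin.sum_univ_three] at h1 h2 ⊢
  simp only [Matrix.cons_val_zero, Matrix.cons_val_one, Matrix.head_cons,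
    Matrix.cons_val_two, Matrix.tail_cons] at h1 h2 ⊢
  constructor <;> nlinarith [h1, h2]

lemma mem_span_pair (a b x : Fin 3 → ℝ)
    (hab : ∀ α β : ℝ, α • a + β • b = 0 → α = 0 ∧ β = 0)
    (hx : x ⬝ᵥ (a ⨯₃ b) = 0) : ∃ α β : ℝ, x = α • a + β • b := by
  have hdet : Matrix.det ![x, a, b] = 0 := by
    rw [← triple_product_eq_det]
    exact hx
  obtain ⟨c, hc0, hc⟩ := Matrix.exists_vecMul_eq_zero_iff.2 hdet
  have hlin : c 0 • x + c 1 • a + c 2 • b = 0 := by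
    funext j
    have := congrFun hc j
    simp [Matrix.vecMul, dotProduct, Fin.sum_univ_three] at this
    simpa [mul_comm] using this
  have hc0ne : c 0 ≠ 0 := by
    intro h0
    have : c 1 • a + c 2 • b = 0 := by
      rw [h0] at hlin; simpa using hlin
    obtain ⟨h1, h2⟩ := hab _ _ this
    apply hc0
    funext i
    fin_cases i <;> simp [h0, h1, h2]
  refine ⟨-(c 1 / c 0), -(c 2 / c 0), ?_⟩
  have key : c 0 • x = -(c 1 • a) - c 2 • b := by
    funext j
    have := congrFun hlin j
    simp only [Pi.add_apply, Pi.smul_apply, Pi.zero_apply, smul_eq_mul, Pi.sub_apply,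
      Pi.neg_apply] at this ⊢
    linarith
  calc x = (c 0)⁻¹ • (c 0 • x) := by rw [inv_smul_smul₀ hc0ne]
    _ = -(c 1 / c 0) • a + -(c 2 / c 0) • b := by
        rw [key]; funext j; simp [div_eq_inv_mul]; ring

theorem key_identity
    (f g h : (Fin 2 → ℝ) → (Fin 3 → ℝ))
    (hf : ContDiff ℝ (⊤ : ℕ∞) f) (hg : ContDiff ℝ (⊤ : ℕ∞) g) (hh : ContDiff ℝ (⊤ : ℕ∞) h)
    (hdarboux : ∀ p (v : Fin 2 → ℝ), fderiv ℝ g p v = h p ⨯₃ fderiv ℝ f p v)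
    (p : Fin 2 → ℝ) (u v : Fin 2 → ℝ) :
    fderiv ℝ h p u ⨯₃ fderiv ℝ f p v = fderiv ℝ h p v ⨯₃ fderiv ℝ f p u := by
  have hfd : Differentiable ℝ f := hf.differentiable (by simp)
  have hgd : Differentiable ℝ g := hg.differentiable (by simp)
  have hhd : Differentiable ℝ h := hh.differentiable (by simp)
  have hf' : Differentiable ℝ (fderiv ℝ f) :=
    (hf.fderiv_right (m := 1) (WithTop.coe_le_coe.2 le_top)).differentiable one_ne_zero
  have hg' : Differentiable ℝ (fderiv ℝ g) :=
    (hg.fderiv_right (m := 1) (WithTop.coe_le_coe.2 le_top)).differentiable one_ne_zero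
  -- fderiv g = composed form
  have hGeq : fderiv ℝ g = fun q => (clmCross (h q)).comp (fderiv ℝ f q) := by
    funext q
    exact ContinuousLinearMap.ext fun w => by simpa using hdarboux q w
  -- derivative of fderiv g at p
  have hc : HasFDerivAt (fun q => clmCross (h q)) (clmCross.comp (fderiv ℝ h p)) p :=
    clmCross.hasFDerivAt.comp p (hhd p).hasFDerivAt
  have hd : HasFDerivAt (fderiv ℝ f) (fderiv ℝ (fderiv ℝ f) p) p := (hf' p).hasFDerivAt
  have hD : HasFDerivAt (fderiv ℝ g)
      ((compL ℝ (Fin 2 → ℝ) (Fin 3 → ℝ) (Fin 3 → ℝ) (clmCross (h p))).comp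
          (fderiv ℝ (fderiv ℝ f) p) +
        ((compL ℝ (Fin 2 → ℝ) (Fin 3 → ℝ) (Fin 3 → ℝ)).flip (fderiv ℝ f p)).comp
          (clmCross.comp (fderiv ℝ h p))) p := by
    rw [hGeq]
    exact hc.clm_comp hd
  have hsg := second_derivative_symmetric (fun y => (hgd y).hasFDerivAt) hD u v
  have hsf := second_derivative_symmetric (fun y => (hfd y).hasFDerivAt)
    (hf' p).hasFDerivAt u v
  simp only [ContinuousLinearMap.add_apply, ContinuousLinearMap.comp_apply,
    ContinuousLinearMap.flip_apply, compL_apply, clmCross_apply] at hsg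
  rw [hsf] at hsg
  exact add_left_cancel hsg


/-- For a Darboux triple `(f, g, h)` on the (connected) surface `ℝ²` with `f`
an immersion, the image of `dh(p)` is contained in the image of `df(p)` at every point. -/
theorem darboux_stmt4
    (f g h : (Fin 2 → ℝ) → (Fin 3 → ℝ))
    (hf : ContDiff ℝ (⊤ : ℕ∞) f) (hg : ContDiff ℝ (⊤ : ℕ∞) g) (hh : ContDiff ℝ (⊤ : ℕ∞) h)
    (himm : ∀ p, Function.Injective (fderiv ℝ f p))
    (hdarboux : ∀ p (v : Fin 2 → ℝ), fderiv ℝ g p v = h p ⨯₃ fderiv ℝ f p v) :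
    ∀ p, Set.range (fderiv ℝ h p) ⊆ Set.range (fderiv ℝ f p) := by
  intro p w hw
  obtain ⟨v, rfl⟩ := hw
  set e0 : Fin 2 → ℝ := Pi.single 0 1 with he0
  set e1 : Fin 2 → ℝ := Pi.single 1 1 with he1
  set a := fderiv ℝ f p e0 with ha
  set b := fderiv ℝ f p e1 with hb
  set x := fderiv ℝ h p e0 with hx
  set y := fderiv ℝ h p e1 with hy
  -- independence of a, b
  have hab : ∀ α β : ℝ, α • a + β • b = 0 → α = 0 ∧ β = 0 := by
    intro α β hαβ
    have h1 : fderiv ℝ f p (α • e0 + β • e1) = fderiv ℝ f p 0 := by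
      simp [map_add, _root_.ContinuousLinearMap.map_smul, ← ha, ← hb, hαβ]
    have h2 := himm p h1
    constructor
    · have := congrFun h2 0; simpa [he0, he1] using this
    · have := congrFun h2 1; simpa [he0, he1] using this
  have hkey : x ⨯₃ b = y ⨯₃ a :=
    key_identity f g h hf hg hh hdarboux p e0 e1
  obtain ⟨hx0, hy0⟩ := dot_cross_zero_of_cross_eq x y a b hkey
  obtain ⟨α₁, β₁, hx1⟩ := mem_span_pair a b x hab hx0
  obtain ⟨α₂, β₂, hy1⟩ := mem_span_pair a b y hab hy0
  -- decompose v
  have hv : v = v 0 • e0 + v 1 • e1 := by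
    funext j; fin_cases j <;> simp [he0, he1]
  refine ⟨(v 0 * α₁ + v 1 * α₂) • e0 + (v 0 * β₁ + v 1 * β₂) • e1, ?_⟩
  rw [map_add, ContinuousLinearMap.map_smul, ContinuousLinearMap.map_smul, ← ha, ← hb]
  conv_rhs => rw [hv]
  rw [map_add, ContinuousLinearMap.map_smul, ContinuousLinearMap.map_smul, ← hx, ← hy, hx1, hy1]
  funext j
  simp only [Pi.add_apply, Pi.smul_apply, smul_eq_mul]
  ring
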